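/- Let F = ℝ or ℂ, m ≤ n ≤ 2m, ℓ ≤ ⌊n/2⌋. Let X_{11}, X_{22}, Y be nonsingular matrices of sizes (n−ℓ)×(n−ℓ), (m+ℓ−n)×(m+ℓ−n), ℓ×ℓ respectively, and let X_{12} be arbitrary. Define m×n matrices A = [[X_{11}, X_{12}, O],[O, X_{22}, O]] and B = [[O, Y],[O, O]] (with Y positioned in the last ℓ columns of the first ℓ rows). Then the tensor rank of (A;B) over F equals m + ℓ. -/

import Mathlib

open Matrix BigOperators

/-- A pair of matrices `(A; B)` admits a simultaneous decomposition into `r`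
rank-one tensors. -/
def pairDecomp {F : Type*} [Field F] {m n : Type*} [Fintype m] [Fintype n] (r : ℕ)
    (A B : Matrix m n F) : Prop :=
  ∃ (a : Fin r → m → F) (b : Fin r → n → F) (α β : Fin r → F),
    A = ∑ i, α i • Matrix.vecMulVec (a i) (b i) ∧
    B = ∑ i, β i • Matrix.vecMulVec (a i) (b i)

/-- The tensor rank of the pair of matrices `(A; B)`. -/
noncomputable def pairRank {F : Type*} [Field F] {m n : Type*} [Fintype m] [Fintype n]
    (A B : Matrix m n F) : ℕ :=
  sInf {r | pairDecomp r A B}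

/-- The pair `(A; B)` of rectangular matrices is diagonalizable. -/
def pairDiag {F : Type*} [Field F] {m n : ℕ} (A B : Matrix (Fin m) (Fin n) F) : Prop :=
  ∃ (P : (Matrix (Fin m) (Fin m) F)ˣ) (Q : (Matrix (Fin n) (Fin n) F)ˣ),
    (∀ (i : Fin m) (j : Fin n), (i : ℕ) ≠ (j : ℕ) → ((P : Matrix (Fin m) (Fin m) F) * A * (Q : Matrix (Fin n) (Fin n) F)) i j = 0) ∧
    (∀ (i : Fin m) (j : Fin n), (i : ℕ) ≠ (j : ℕ) → ((P : Matrix (Fin m) (Fin m) F) * B * (Q : Matrix (Fin n) (Fin n) F)) i j = 0)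

/-- The nilpotent Jordan block of size `k`. -/
def jordanNil {F : Type*} [Field F] (k : ℕ) : Matrix (Fin k) (Fin k) F :=
  Matrix.of fun i j => if (i : ℕ) + 1 = (j : ℕ) then 1 else 0

/-!
The `m` rows of `A` and the `ℓ` nonzero rows of `B` give a decomposition of length `m + ℓ`.

Conversely, take a decomposition of length `r`. For a generic `c`, the pencil member
`M = A + c • B` factors as `U * V` with `B = U * D * V`, `D` diagonal. Since `M` is
surjective and `range B ≤ A (ker B)`, there is `W` with `M W = B`, `W² = 0` and
`range W ∩ ker M = 0`. Let `S ⊇ range W` be a complement of `ker M`; then `V S` has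
dimension at least `m`, and `D V y ∈ V S` forces `D V y = V W y`. With `ker D² = ker D`
this makes `D V` inject `range W` into `F^r ⧸ V S` in two layers (on `range W`, then on a
lift of its kernel through `W`), so `r ≥ m + rank W ≥ m + rank B ≥ m + ℓ`.
-/

section LinearAlgebra
open LinearMap Module Submodule

variable {F E R M : Type*} [Field F] [AddCommGroup E] [Module F E] [AddCommGroup R] [Module F R]
  [AddCommGroup M] [Module F M] {U : R →ₗ[F] M} {V : E →ₗ[F] R} {D : R →ₗ[F] R} {W : E →ₗ[F] E}

theorem finrank_le_of_injective_ker_to_coker {P Q : Type*} [AddCommGroup P] [Module F P]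
    [FiniteDimensional F P] [AddCommGroup Q] [Module F Q] [FiniteDimensional F Q]
    (f : P →ₗ[F] Q) (g : ker f →ₗ[F] Q ⧸ range f) (hg : Function.Injective g) :
    finrank F P ≤ finrank F Q := by
  have := finrank_le_finrank_of_injective hg
  have := (range f).finrank_quotient_add_finrank
  have := f.finrank_range_add_finrank_ker
  omega

theorem apply_eq_apply_of_mem_map {S : Submodule F E} (hUVW : ∀ x, U (V (W x)) = U (D (V x)))
    (hS : Disjoint S (ker (U ∘ₗ V))) (hWS : range W ≤ S) {y : E} (hy : D (V y) ∈ S.map V) :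
    D (V y) = V (W y) := by
  obtain ⟨s, hs, hVs⟩ := hy
  have : s - W y = 0 := by
    refine disjoint_def.1 hS _ (S.sub_mem hs (hWS (mem_range_self W y))) ?_
    simp [hVs, hUVW]
  rw [← hVs, sub_eq_zero.1 this]

theorem finrank_range_le_finrank_quotient [FiniteDimensional F E] [FiniteDimensional F R]
    {S : Submodule F E} (hD : ∀ x, D (D x) = 0 → D x = 0)
    (hW : ∀ x, W (W x) = 0) (hUVW : ∀ x, U (V (W x)) = U (D (V x)))
    (hS : Disjoint S (ker (U ∘ₗ V))) (hWS : range W ≤ S) :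
    finrank F (range W) ≤ finrank F (R ⧸ S.map V) := by
  have hDV := fun y => apply_eq_apply_of_mem_map (y := y) hUVW hS hWS
  let Λ : range W →ₗ[F] R ⧸ S.map V := (S.map V).mkQ ∘ₗ D ∘ₗ V ∘ₗ (range W).subtype
  obtain ⟨σ, hσ⟩ := W.rangeRestrict.exists_rightInverse_of_surjective W.range_rangeRestrict
  have hWσ : ∀ u, W (σ u) = u := fun u => congr_arg Subtype.val (LinearMap.congr_fun hσ u)
  refine finrank_le_of_injective_ker_to_coker Λ
    ((range Λ).mkQ ∘ₗ (S.map V).mkQ ∘ₗ D ∘ₗ V ∘ₗ σ ∘ₗ (ker Λ).subtype) ?_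
  rw [← ker_eq_bot, eq_bot_iff]
  rintro ⟨⟨_, y, rfl⟩, hΛ⟩ h
  have hDVWy : D (V (W y)) = 0 := by
    rw [hDV _ (by simpa [Λ, Submodule.Quotient.mk_eq_zero] using hΛ), hW, map_zero]
  obtain ⟨⟨_, y', rfl⟩, hy'⟩ : (S.map V).mkQ (D (V (σ ⟨W y, y, rfl⟩))) ∈ range Λ := by
    simpa [Submodule.Quotient.mk_eq_zero] using h
  have hchain : D (V (σ ⟨W y, y, rfl⟩ - W y')) = V (W y) := by
    rw [hDV, map_sub, hWσ, hW, sub_zero]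
    simpa [Λ, ← Submodule.Quotient.mk_sub, Submodule.Quotient.eq, sub_eq_zero] using hy'.symm
  have hVWy : V (W y) = 0 := by
    rw [← hchain]; exact hD _ (by rw [hchain, hDVWy])
  have : W y = 0 := disjoint_def.1 (hS.mono_left hWS) _ (mem_range_self W y) (by simp [hVWy])
  simp [this]

theorem finrank_add_finrank_range_le [FiniteDimensional F E] [FiniteDimensional F R]
    (hD : ∀ x, D (D x) = 0 → D x = 0)
    (hW : ∀ x, W (W x) = 0) (hUVW : ∀ x, U (V (W x)) = U (D (V x)))
    (hUV : Function.Surjective (U ∘ₗ V)) (hWUV : Disjoint (range W) (ker (U ∘ₗ V))) :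
    finrank F M + finrank F (range W) ≤ finrank F R := by
  obtain ⟨S, hWS, hS⟩ := hWUV.exists_isCompl
  have hSV : finrank F M ≤ finrank F (S.map V) := by
    have : (S.map V).map U = ⊤ := by
      rw [← Submodule.map_comp, map_eq_top_iff (range_eq_top.2 hUV)]
      exact hS.sup_eq_top
    rw [← finrank_top F M, ← this]
    exact finrank_map_le U _
  have := finrank_range_le_finrank_quotient hD hW hUVW hS.disjoint hWS
  have := (S.map V).finrank_quotient_add_finrank
  omega

theorem exists_apply_eq_of_range_le_map_ker {A B : E →ₗ[F] M} (h : range B ≤ (ker B).map A) :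
    ∃ W : E →ₗ[F] E, (∀ x, A (W x) = B x) ∧ (∀ x, W (W x) = 0) ∧ Disjoint (range W) (ker A) := by
  let f := A ∘ₗ (ker B).subtype
  have hBf : range B ≤ range f := by rwa [range_comp, range_subtype]
  obtain ⟨g, hg⟩ := Module.projective_lifting_property f.rangeRestrict (inclusion hBf)
    (range_eq_top.1 f.range_rangeRestrict)
  let W := (ker B).subtype ∘ₗ g ∘ₗ B.rangeRestrict
  have hAW : ∀ x, A (W x) = B x := fun x =>
    congr_arg Subtype.val (LinearMap.congr_fun hg (B.rangeRestrict x))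
  have hW : ∀ x, B x = 0 → W x = 0 := fun x hx => by
    simp [W, show B.rangeRestrict x = 0 from Subtype.ext hx]
  refine ⟨W, hAW, fun x => hW _ (g _).2, ?_⟩
  rw [disjoint_def]
  rintro _ ⟨x, rfl⟩ hx
  exact hW x (by rw [← hAW]; exact hx)

end LinearAlgebra

theorem mulVec_one_submatrix_mulVec {R : Type*} [CommSemiring R] {m n k : Type*} [Fintype n]
    [Fintype k] [DecidableEq n] (M : Matrix m n R) (g : k → n) (v : k → R) :
    M *ᵥ ((1 : Matrix n n R).submatrix id g *ᵥ v) = M.submatrix id g *ᵥ v := by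
  simpa [mulVec_mulVec] using congr_arg (· *ᵥ v) (mul_submatrix_one (Equiv.refl n) g M)

theorem sum_vecMulVec_single_of_row_eq_zero {R : Type*} [Semiring R] {m n k : Type*}
    [DecidableEq m] [Fintype k] {e : k → m} (he : Function.Injective e) {A : Matrix m n R}
    (hA : ∀ i, i ∉ Set.range e → A i = 0) :
    ∑ a, vecMulVec (Pi.single (e a) 1) (A (e a)) = A := by
  ext i j
  simp only [Matrix.sum_apply, vecMulVec_apply, Pi.single_apply]
  by_cases hi : i ∈ Set.range e
  · obtain ⟨a, rfl⟩ := hi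
    rw [Finset.sum_eq_single a (fun b _ hb => by rw [if_neg (he.ne hb).symm, zero_mul])
      (by simp), if_pos rfl, one_mul]
  · simp [hA i hi, show ∀ a, i ≠ e a from fun a h => hi ⟨a, h.symm⟩]

section PairDecomp
variable {F : Type*} [Field F] {m n : Type*} [Fintype m] [Fintype n]

theorem pairDecomp.swap {r : ℕ} {A B : Matrix m n F} (h : pairDecomp r A B) :
    pairDecomp r B A :=
  let ⟨a, b, α, β, hA, hB⟩ := h
  ⟨a, b, β, α, hB, hA⟩

theorem pairDecomp.add {r s : ℕ} {A B A' B' : Matrix m n F} (h : pairDecomp r A B)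
    (h' : pairDecomp s A' B') : pairDecomp (r + s) (A + A') (B + B') := by
  obtain ⟨a, b, α, β, rfl, rfl⟩ := h
  obtain ⟨a', b', α', β', rfl, rfl⟩ := h'
  exact ⟨Fin.append a a', Fin.append b b', Fin.append α α', Fin.append β β',
    by simp [Fin.sum_univ_add], by simp [Fin.sum_univ_add]⟩

theorem pairDecomp_zero_of_row_eq_zero {k : ℕ} {e : Fin k → m} (he : Function.Injective e)
    {A : Matrix m n F} (hA : ∀ i, i ∉ Set.range e → A i = 0) : pairDecomp k A 0 := by
  classical
  exact ⟨fun a => Pi.single (e a) 1, fun a => A (e a), 1, 0,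
    by simpa using (sum_vecMulVec_single_of_row_eq_zero he hA).symm, by simp⟩

theorem pairDecomp.exists_add_smul_eq_mul [Infinite F] {r : ℕ} {A B : Matrix m n F}
    (h : pairDecomp r A B) : ∃ (c : F) (U : Matrix m (Fin r) F) (V : Matrix (Fin r) n F)
      (t : Fin r → F), A + c • B = U * V ∧ B = U * diagonal t * V := by
  classical
  obtain ⟨a, b, α, β, rfl, rfl⟩ := h
  obtain ⟨c, hc⟩ := Infinite.exists_notMem_finset (Finset.univ.image fun i => -α i / β i)
  have hβ : ∀ i, α i + c * β i = 0 → β i = 0 := fun i hi => by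
    by_contra hβi
    exact hc (Finset.mem_image.2 ⟨i, Finset.mem_univ i, by field_simp; linear_combination -hi⟩)
  -- Where `α i + c * β i = 0` the `i`-th term vanishes, so the junk `t i = β i / 0` is harmless.
  refine ⟨c, of fun x i => (α i + c * β i) * a i x, of b, fun i => β i / (α i + c * β i), ?_, ?_⟩
  · ext x y
    simp only [Matrix.add_apply, Matrix.smul_apply, Matrix.sum_apply, vecMulVec_apply, mul_apply,
      of_apply, smul_eq_mul, Finset.mul_sum, ← Finset.sum_add_distrib]
    exact Finset.sum_congr rfl fun i _ => by ring
  · ext x y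
    rw [mul_apply]
    simp only [Matrix.sum_apply, Matrix.smul_apply, vecMulVec_apply, mul_diagonal, of_apply,
      smul_eq_mul]
    refine Finset.sum_congr rfl fun i _ => ?_
    by_cases hi : α i + c * β i = 0
    · simp [hβ i hi]
    · linear_combination -(a i x * b i y) * mul_div_cancel₀ (β i) hi

open LinearMap Module Submodule in
theorem card_add_rank_le_of_pairDecomp [Infinite F] {A B : Matrix m n F}
    (hA : ∀ c : F, Function.Surjective (A + c • B).mulVecLin)
    (hB : range B.mulVecLin ≤ (ker B.mulVecLin).map A.mulVecLin) {r : ℕ}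
    (h : pairDecomp r A B) : Fintype.card m + B.rank ≤ r := by
  obtain ⟨c, U, V, t, hUV, hUDV⟩ := h.exists_add_smul_eq_mul
  have hBM : range B.mulVecLin ≤ (ker B.mulVecLin).map (A + c • B).mulVecLin := by
    rintro _ hy
    obtain ⟨z, hz, hAz⟩ := hB hy
    refine ⟨z, hz, ?_⟩
    have hBz : B *ᵥ z = 0 := hz
    simp [← hAz, hBz]
  obtain ⟨W, hMW, hW, hWM⟩ := exists_apply_eq_of_range_le_map_ker hBM
  have hrank : B.rank ≤ finrank F (range W) := by
    have : range B.mulVecLin = (range W).map (A + c • B).mulVecLin := by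
      rw [← range_comp]; congr 1; exact LinearMap.ext fun x => (hMW x).symm
    rw [Matrix.rank, this]
    exact finrank_map_le _ _
  have hD : ∀ x, (diagonal t).mulVecLin ((diagonal t).mulVecLin x) = 0 →
      (diagonal t).mulVecLin x = 0 := fun x hx => funext fun i => by
    have hxi := congr_fun hx i
    simp only [mulVecLin_apply, mulVec_diagonal, Pi.zero_apply] at hxi ⊢
    exact (mul_eq_zero.1 hxi).elim (fun h => by simp [h]) id
  have hsurj := hA c
  rw [hUV, mulVecLin_mul] at hMW hWM hsurj
  have hUVW : ∀ x, U.mulVecLin (V.mulVecLin (W x)) =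
      U.mulVecLin ((diagonal t).mulVecLin (V.mulVecLin x)) := fun x => by
    simpa [hUDV, mulVec_mulVec, Matrix.mul_assoc] using hMW x
  have := finrank_add_finrank_range_le hD hW hUVW hsurj hWM
  simp only [finrank_fintype_fun_eq_card, Fintype.card_fin] at this
  omega

end PairDecomp

section Blocks
variable {F : Type*} [Field F] {m n ℓ : ℕ}

-- `blockA X11 X12 X22` and `blockB Y` are the matrices `A` and `B` of `pairRank_block_eq`.
def blockA (X11 : Matrix (Fin (n - ℓ)) (Fin (n - ℓ)) F)
    (X12 : Matrix (Fin (n - ℓ)) (Fin (m + ℓ - n)) F)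
    (X22 : Matrix (Fin (m + ℓ - n)) (Fin (m + ℓ - n)) F) : Matrix (Fin m) (Fin n) F :=
  Matrix.of fun (i : Fin m) (j : Fin n) =>
    if hi : (i : ℕ) < n - ℓ then
      if hj : (j : ℕ) < n - ℓ then X11 ⟨i, hi⟩ ⟨j, hj⟩
      else if hj2 : (j : ℕ) < (n - ℓ) + (m + ℓ - n) then
        X12 ⟨i, hi⟩ ⟨(j : ℕ) - (n - ℓ), Nat.sub_lt_left_of_lt_add (not_lt.1 hj) hj2⟩
      else 0
    else
      if hj : n - ℓ ≤ (j : ℕ) ∧ (j : ℕ) < (n - ℓ) + (m + ℓ - n) then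
        X22 ⟨(i : ℕ) - (n - ℓ), Nat.sub_lt_left_of_lt_add (not_lt.1 hi) (by omega)⟩
          ⟨(j : ℕ) - (n - ℓ), Nat.sub_lt_left_of_lt_add hj.1 hj.2⟩
      else 0

def blockB (Y : Matrix (Fin ℓ) (Fin ℓ) F) : Matrix (Fin m) (Fin n) F :=
  Matrix.of fun (i : Fin m) (j : Fin n) =>
    if hi : (i : ℕ) < ℓ then
      if hj : n - ℓ ≤ (j : ℕ) then
        Y ⟨i, hi⟩ ⟨(j : ℕ) - (n - ℓ), Nat.sub_lt_left_of_lt_add hj (j.isLt.trans_le le_tsub_add)⟩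
      else 0
    else 0

variable (X11 : Matrix (Fin (n - ℓ)) (Fin (n - ℓ)) F)
  (X12 : Matrix (Fin (n - ℓ)) (Fin (m + ℓ - n)) F)
  (X22 : Matrix (Fin (m + ℓ - n)) (Fin (m + ℓ - n)) F) (Y : Matrix (Fin ℓ) (Fin ℓ) F)
  {i : Fin m} {j : Fin n}

theorem blockA_apply_of_lt (hi : (i : ℕ) < n - ℓ) (hj : (j : ℕ) < n - ℓ) :
    blockA X11 X12 X22 i j = X11 ⟨i, hi⟩ ⟨j, hj⟩ := by
  simp [blockA, hi, hj]

theorem blockA_apply_eq_zero (hi : n - ℓ ≤ (i : ℕ)) (hj : (j : ℕ) < n - ℓ) :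
    blockA X11 X12 X22 i j = 0 := by
  rw [blockA, of_apply, dif_neg hi.not_gt, dif_neg (by omega)]

theorem blockA_apply_of_le (hi : n - ℓ ≤ (i : ℕ)) (hj : n - ℓ ≤ (j : ℕ)) (hjm : (j : ℕ) < m) :
    blockA X11 X12 X22 i j =
      X22 ⟨i - (n - ℓ), Nat.sub_lt_left_of_lt_add hi (by omega)⟩
        ⟨j - (n - ℓ), Nat.sub_lt_left_of_lt_add hj (by omega)⟩ := by
  rw [blockA, of_apply, dif_neg hi.not_gt, dif_pos ⟨hj, by omega⟩]

theorem blockB_apply_eq_zero_of_le (hi : ℓ ≤ (i : ℕ)) : blockB (m := m) (n := n) Y i j = 0 := by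
  simp [blockB, hi.not_gt]

theorem blockB_apply_eq_zero_of_lt (hj : (j : ℕ) < n - ℓ) :
    blockB (m := m) (n := n) Y i j = 0 := by
  rw [blockB, of_apply]
  split_ifs <;> first | rfl | omega

theorem blockB_apply (hi : (i : ℕ) < ℓ) (hj : n - ℓ ≤ (j : ℕ)) :
    blockB Y i j =
      Y ⟨i, hi⟩ ⟨j - (n - ℓ), Nat.sub_lt_left_of_lt_add hj (j.isLt.trans_le le_tsub_add)⟩ := by
  rw [blockB, of_apply, dif_pos hi, dif_pos hj]

theorem blockB_submatrix_castLE :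
    (blockB Y : Matrix (Fin m) (Fin n) F).submatrix id (Fin.castLE (Nat.sub_le n ℓ)) = 0 := by
  ext i j
  exact blockB_apply_eq_zero_of_lt Y j.isLt

theorem exists_blockA_submatrix_mulVec_eq (hX11 : IsUnit X11.det) (w : Fin m → F) :
    ∃ v, (blockA X11 X12 X22).submatrix id (Fin.castLE (Nat.sub_le n ℓ)) *ᵥ v =
      fun i : Fin m => if (i : ℕ) < n - ℓ then w i else 0 := by
  obtain ⟨v, hv⟩ := mulVec_surjective_iff_isUnit.2 ((isUnit_iff_isUnit_det X11).2 hX11)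
    fun a => if h : (a : ℕ) < m then w ⟨a, h⟩ else 0
  refine ⟨v, funext fun i => ?_⟩
  split_ifs with hi
  · have hrow : (blockA X11 X12 X22).submatrix id (Fin.castLE (Nat.sub_le n ℓ)) i = X11 ⟨i, hi⟩ :=
      funext fun j => blockA_apply_of_lt X11 X12 X22 hi j.isLt
    rw [show (_ *ᵥ v) i = X11 ⟨i, hi⟩ ⬝ᵥ v from congr_arg (· ⬝ᵥ v) hrow, ← mulVec, hv]
    simp [i.isLt]
  · simp [mulVec, dotProduct, blockA_apply_eq_zero X11 X12 X22 (not_lt.1 hi)]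

theorem surjective_mulVecLin_blockA_add_smul_blockB (hm : m ≤ n) (hℓ : ℓ ≤ n - ℓ)
    (hX11 : IsUnit X11.det) (hX22 : IsUnit X22.det) (c : F) :
    Function.Surjective (blockA X11 X12 X22 + c • blockB Y).mulVecLin := by
  set M := blockA X11 X12 X22 + c • blockB Y
  intro y
  let g : Fin (m + ℓ - n) → Fin n := fun k => ⟨n - ℓ + k, by omega⟩
  obtain ⟨v₂, hv₂⟩ := mulVec_surjective_iff_isUnit.2 ((isUnit_iff_isUnit_det X22).2 hX22)
    fun k => y ⟨n - ℓ + k, by omega⟩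
  -- `z₂` solves the bottom rows, where `M` is `[0, X22, 0]`.
  set z₂ := (1 : Matrix (Fin n) (Fin n) F).submatrix id g *ᵥ v₂
  have hz₂ : ∀ i : Fin m, n - ℓ ≤ (i : ℕ) → (M *ᵥ z₂) i = y i := fun i hi => by
    have hrow : M.submatrix id g i = X22 ⟨i - (n - ℓ), by omega⟩ := funext fun k => by
      simp only [M, g, submatrix_apply, id, Matrix.add_apply, Matrix.smul_apply,
        blockB_apply_eq_zero_of_le Y (hℓ.trans hi), smul_zero, add_zero]
      rw [blockA_apply_of_le X11 X12 X22 hi (Nat.le_add_right _ _)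
        (by have := k.isLt; dsimp only; omega)]
      exact congr_arg _ (Fin.ext (Nat.add_sub_cancel_left ..))
    rw [mulVec_one_submatrix_mulVec,
      show (_ *ᵥ v₂) i = X22 ⟨i - (n - ℓ), by omega⟩ ⬝ᵥ v₂ from congr_arg (· ⬝ᵥ v₂) hrow,
      ← mulVec, hv₂]
    exact congr_arg y (Fin.ext (by dsimp only; omega))
  -- A correction supported on the first `n - ℓ` columns fixes the top rows and leaves the
  -- bottom ones alone.
  obtain ⟨v₁, hv₁⟩ := exists_blockA_submatrix_mulVec_eq X11 X12 X22 hX11 (y - M *ᵥ z₂)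
  refine ⟨(1 : Matrix (Fin n) (Fin n) F).submatrix id (Fin.castLE (Nat.sub_le n ℓ)) *ᵥ v₁ + z₂, ?_⟩
  have hM : M.submatrix id (Fin.castLE (Nat.sub_le n ℓ)) =
      (blockA X11 X12 X22).submatrix id (Fin.castLE (Nat.sub_le n ℓ)) := by
    ext i j
    have hB := congr_fun₂ (blockB_submatrix_castLE (m := m) Y) i j
    simp only [submatrix_apply, id, Matrix.zero_apply] at hB
    simp [M, hB]
  ext i
  simp only [mulVecLin_apply, mulVec_add, Pi.add_apply, mulVec_one_submatrix_mulVec, hM, hv₁]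
  split_ifs with hi
  · simp
  · simp [hz₂ i (by omega)]

theorem range_blockB_le_map_ker (hℓ : ℓ ≤ n - ℓ) (hX11 : IsUnit X11.det) :
    LinearMap.range (blockB Y : Matrix (Fin m) (Fin n) F).mulVecLin ≤
      (LinearMap.ker (blockB Y : Matrix (Fin m) (Fin n) F).mulVecLin).map
        (blockA X11 X12 X22).mulVecLin := by
  rintro _ ⟨x, rfl⟩
  obtain ⟨v, hv⟩ := exists_blockA_submatrix_mulVec_eq X11 X12 X22 hX11 (blockB Y *ᵥ x)
  refine ⟨(1 : Matrix (Fin n) (Fin n) F).submatrix id (Fin.castLE (Nat.sub_le n ℓ)) *ᵥ v, ?_, ?_⟩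
  · change blockB Y *ᵥ (_ *ᵥ v) = 0
    rw [mulVec_one_submatrix_mulVec, blockB_submatrix_castLE, zero_mulVec]
  · ext i
    simp only [mulVecLin_apply, mulVec_one_submatrix_mulVec, hv]
    split_ifs with hi
    · rfl
    · simp [mulVec, dotProduct, blockB_apply_eq_zero_of_le Y (show ℓ ≤ (i : ℕ) by omega)]

theorem le_rank_blockB (hℓ : ℓ ≤ n - ℓ) (hℓm : ℓ ≤ m) (hY : IsUnit Y.det) :
    ℓ ≤ (blockB Y : Matrix (Fin m) (Fin n) F).rank := by
  let g : Fin ℓ → Fin n := fun k => ⟨n - ℓ + k, by omega⟩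
  have hsub : (blockB Y : Matrix (Fin m) (Fin n) F).submatrix (Fin.castLE hℓm) g = Y := by
    ext i k
    rw [submatrix_apply, blockB_apply Y (i := Fin.castLE hℓm i) i.isLt (Nat.le_add_right _ _)]
    simp only [g, Fin.val_castLE, Nat.add_sub_cancel_left, Fin.eta]
  have := rank_submatrix_le (blockB Y : Matrix (Fin m) (Fin n) F) (Fin.castLE hℓm) g
  rwa [hsub, rank_of_isUnit Y ((isUnit_iff_isUnit_det Y).2 hY), Fintype.card_fin] at this

theorem pairDecomp_blockA_blockB (hℓm : ℓ ≤ m) :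
    pairDecomp (m + ℓ) (blockA X11 X12 X22) (blockB Y) := by
  have hA := pairDecomp_zero_of_row_eq_zero (A := blockA X11 X12 X22) Function.injective_id
    (by simp)
  have hB := pairDecomp_zero_of_row_eq_zero (A := (blockB Y : Matrix (Fin m) (Fin n) F))
    (Fin.castLE_injective hℓm)
    fun i hi => funext fun j => blockB_apply_eq_zero_of_le Y (not_lt.1 fun h => hi ⟨⟨i, h⟩, rfl⟩)
  simpa using hA.add hB.swap

end Blocks

/-- The rank of the pair `(A; B)` with `A = [[X₁₁, X₁₂, O], [O, X₂₂, O]]` and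
`B = [[O, Y], [O, O]]` (with `Y` in the last `ℓ` columns of the first `ℓ` rows) is
`m + ℓ`. -/
theorem pairRank_block_eq {F : Type*} [RCLike F] {m n ℓ : ℕ}
    (hm : m ≤ n) (hn : n ≤ 2 * m) (hl : ℓ ≤ n / 2)
    (X11 : Matrix (Fin (n - ℓ)) (Fin (n - ℓ)) F) (hX11 : IsUnit X11.det)
    (X12 : Matrix (Fin (n - ℓ)) (Fin (m + ℓ - n)) F)
    (X22 : Matrix (Fin (m + ℓ - n)) (Fin (m + ℓ - n)) F) (hX22 : IsUnit X22.det)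
    (Y : Matrix (Fin ℓ) (Fin ℓ) F) (hY : IsUnit Y.det)
    (A B : Matrix (Fin m) (Fin n) F)
    (hA : A = Matrix.of fun (i : Fin m) (j : Fin n) =>
      if hi : (i : ℕ) < n - ℓ then
        if hj : (j : ℕ) < n - ℓ then X11 ⟨i, hi⟩ ⟨j, hj⟩
        else if hj2 : (j : ℕ) < (n - ℓ) + (m + ℓ - n) then
          X12 ⟨i, hi⟩ ⟨(j : ℕ) - (n - ℓ), by omega⟩
        else 0
      else
        if hj : n - ℓ ≤ (j : ℕ) ∧ (j : ℕ) < (n - ℓ) + (m + ℓ - n) then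
          X22 ⟨(i : ℕ) - (n - ℓ), by have := i.isLt; omega⟩ ⟨(j : ℕ) - (n - ℓ), by omega⟩
        else 0)
    (hB : B = Matrix.of fun (i : Fin m) (j : Fin n) =>
      if hi : (i : ℕ) < ℓ then
        if hj : n - ℓ ≤ (j : ℕ) then
          Y ⟨i, hi⟩ ⟨(j : ℕ) - (n - ℓ), by have := j.isLt; omega⟩
        else 0
      else 0) :
    pairRank A B = m + ℓ := by
  have hℓ : ℓ ≤ n - ℓ := by omega
  have hℓm : ℓ ≤ m := by omega
  obtain rfl : A = blockA X11 X12 X22 := hA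
  obtain rfl : B = blockB Y := hB
  have hupper := pairDecomp_blockA_blockB X11 X12 X22 Y hℓm
  refine le_antisymm (Nat.sInf_le hupper) (le_csInf ⟨_, hupper⟩ fun r hr => ?_)
  calc m + ℓ ≤ Fintype.card (Fin m) + (blockB Y).rank := by
        simpa using le_rank_blockB Y hℓ hℓm hY
    _ ≤ r := card_add_rank_le_of_pairDecomp
        (surjective_mulVecLin_blockA_add_smul_blockB X11 X12 X22 Y hm hℓ hX11 hX22)
        (range_blockB_le_map_ker X11 X12 X22 Y hℓ hX11) hr
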